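/- arXiv:1809.07038 — 4 statements merged into one kernel-verified Lean document; each statement's English description precedes it below -/
import Mathlib

section
/- Let 0<m<1, β>1 with m+2β−2<β (i.e. β<2−m), r>0, z₀>0, and define C₀ := (z₀(β−m)/(2r(β−1)²))^{1/(β−1)}. For C>0 let ψ(z) := C/(z−z₀)^{1/(β−1)}. Then for any C > C₀, ψ is a strict subsolution of the self-similar ODE −(1/(β−1))(φ(z) + ((β−m)/2) z φ'(z)) = (φ^m)''(z) + r φ^β(z) in some right neighborhood of z₀, i.e. the left-hand side is strictly less than the right-hand side there; and for any C < C₀, ψ satisfies the opposite strict inequality (strict supersolution) in some right neighborhood of z₀. -/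
/-!
Write `a = 1/(β-1)` and `t = z - z₀`. For `ψ = C t^(-a)` every term of the self-similar equation
is a multiple of `t^(-a-1)`: the reaction term exactly (as `aβ = a + 1`), the transport term up to
the bounded factors `t` and `z`, and the diffusion term `(ψ^m)''` up to the factor `t^(a(1-m)-1)`,
which tends to `0` because `β < 2 - m`. After dividing by `t^(-a-1)` the residual RHS - LHS is
continuous at `z₀` with value `r C^β - a²(β-m)/2 · z₀ C = r C (C^(β-1) - C₀^(β-1))`, whose sign
is that of `C - C₀` and persists on a right neighbourhood of `z₀`.
-/

open Real Set Filter Topology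

lemma hasDerivAt_mul_sub_rpow (c p : ℝ) {z₀ z : ℝ} (hz : z₀ < z) :
    HasDerivAt (fun y => c * (y - z₀) ^ p) (c * p * (z - z₀) ^ (p - 1)) z := by
  have h := ((hasDerivAt_id z).sub_const z₀).rpow_const (p := p) (Or.inl (sub_pos.2 hz).ne')
  simpa [mul_assoc] using h.const_mul c

lemma deriv_deriv_mul_sub_rpow (c p : ℝ) {z₀ z : ℝ} (hz : z₀ < z) :
    deriv (deriv fun y => c * (y - z₀) ^ p) z = c * p * (p - 1) * (z - z₀) ^ (p - 2) := by
  have hderiv : deriv (fun y => c * (y - z₀) ^ p) =ᶠ[𝓝 z] fun y => c * p * (y - z₀) ^ (p - 1) := by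
    filter_upwards [eventually_gt_nhds hz] with y hy
    exact (hasDerivAt_mul_sub_rpow c p hy).deriv
  rw [hderiv.deriv_eq, (hasDerivAt_mul_sub_rpow (c * p) (p - 1) hz).deriv, sub_sub]
  norm_num

lemma exists_Ioo_forall_of_eventually_nhdsGT {P : ℝ → Prop} {z₀ : ℝ}
    (h : ∀ᶠ z in 𝓝[>] z₀, P z) : ∃ δ > 0, ∀ z ∈ Ioo z₀ (z₀ + δ), P z := by
  obtain ⟨u, hu, hsub⟩ := mem_nhdsGT_iff_exists_Ioo_subset.1 h
  exact ⟨u - z₀, sub_pos.2 hu, fun z hz => hsub (by simpa using hz)⟩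

noncomputable section SelfSimilar

variable {m β r z₀ C : ℝ}

def selfSimilarLHS (m β : ℝ) (φ : ℝ → ℝ) (z : ℝ) : ℝ :=
  -(1/(β-1)) * (φ z + ((β - m)/2) * z * deriv φ z)

def selfSimilarRHS (m β r : ℝ) (φ : ℝ → ℝ) (z : ℝ) : ℝ :=
  deriv (deriv fun y => φ y ^ m) z + r * φ z ^ β

def blowupProfile (β C z₀ : ℝ) : ℝ → ℝ := fun y => C * (y - z₀) ^ (-(1/(β-1)))

def profileResidual (m β r z₀ C z : ℝ) : ℝ :=
  C ^ m * (m / (β - 1)) * (m / (β - 1) + 1) * (z - z₀) ^ ((1 - m) / (β - 1) - 1)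
    + r * C ^ β + C / (β - 1) * (z - z₀) - C * (β - m) / (2 * (β - 1) ^ 2) * z

lemma selfSimilarRHS_sub_LHS_blowupProfile (hβ : β ≠ 1) (hC : 0 < C) {z : ℝ} (hz : z₀ < z) :
    selfSimilarRHS m β r (blowupProfile β C z₀) z - selfSimilarLHS m β (blowupProfile β C z₀) z
      = (z - z₀) ^ (-(1/(β-1)) - 1) * profileResidual m β r z₀ C z := by
  have ht : 0 < z - z₀ := sub_pos.2 hz
  have hpow : ∀ y, z₀ < y → ∀ q, (C * (y - z₀) ^ (-(1/(β-1)))) ^ q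
      = C ^ q * (y - z₀) ^ (-(1/(β-1)) * q) := fun y hy q => by
    rw [mul_rpow hC.le (rpow_nonneg (sub_pos.2 hy).le _), ← rpow_mul (sub_pos.2 hy).le]
  have hpow_m : (fun y => (C * (y - z₀) ^ (-(1/(β-1)))) ^ m) =ᶠ[𝓝 z]
      fun y => C ^ m * (y - z₀) ^ (-(1/(β-1)) * m) := by
    filter_upwards [eventually_gt_nhds hz] with y hy using hpow y hy m
  have e₁ : (z - z₀) ^ (-(1/(β-1))) = (z - z₀) ^ (-(1/(β-1)) - 1) * (z - z₀) := by
    rw [← rpow_add_one ht.ne', sub_add_cancel]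
  have e₂ : (z - z₀) ^ (-(1/(β-1)) * m - 2)
      = (z - z₀) ^ ((1 - m) / (β - 1) - 1) * (z - z₀) ^ (-(1/(β-1)) - 1) := by
    rw [← rpow_add ht]; congr 1; ring
  have e₃ : (z - z₀) ^ (-(1/(β-1)) * β) = (z - z₀) ^ (-(1/(β-1)) - 1) := by
    congr 1; field_simp [sub_ne_zero.2 hβ]; ring
  unfold selfSimilarRHS selfSimilarLHS blowupProfile
  rw [hpow_m.deriv.deriv_eq, deriv_deriv_mul_sub_rpow _ _ hz, hpow z hz,
    (hasDerivAt_mul_sub_rpow C _ hz).deriv, e₁, e₂, e₃, profileResidual]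
  field_simp [sub_ne_zero.2 hβ]
  ring

lemma continuousAt_profileResidual (hβ : 1 < β) (hβm : β < 2 - m) :
    ContinuousAt (profileResidual m β r z₀ C) z₀ := by
  have he : 0 < (1 - m) / (β - 1) - 1 := by
    rw [sub_pos, one_lt_div (sub_pos.2 hβ)]; linarith
  unfold profileResidual
  have hdiffusion : ContinuousAt (fun z => (z - z₀) ^ ((1 - m) / (β - 1) - 1)) z₀ :=
    (continuousAt_rpow_const _ _ (Or.inr he.le)).comp (f := fun z => z - z₀) (by fun_prop)
  fun_prop

lemma profileResidual_self (hβ : 1 < β) (hβm : β < 2 - m) (hr : 0 < r) (hz₀ : 0 ≤ z₀)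
    (hC : 0 < C) {C₀ : ℝ}
    (hC₀ : C₀ = (z₀ * (β - m) / (2 * r * (β - 1) ^ 2)) ^ ((1:ℝ)/(β - 1))) :
    profileResidual m β r z₀ C z₀ = r * C * (C ^ (β - 1) - C₀ ^ (β - 1)) := by
  have he : (1 - m) / (β - 1) - 1 ≠ 0 := by
    rw [sub_ne_zero]; exact (one_lt_div (sub_pos.2 hβ) |>.2 (by linarith)).ne'
  have hX : 0 ≤ z₀ * (β - m) / (2 * r * (β - 1) ^ 2) := by
    have : 0 ≤ β - m := by linarith
    positivity
  rw [hC₀, ← rpow_mul hX, one_div_mul_cancel (sub_pos.2 hβ).ne', rpow_one, profileResidual,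
    sub_self, zero_rpow he, rpow_sub_one hC.ne']
  field_simp
  ring

lemma eventually_selfSimilarLHS_lt_RHS (hβ : 1 < β) (hβm : β < 2 - m) (hC : 0 < C)
    (h : 0 < profileResidual m β r z₀ C z₀) :
    ∀ᶠ z in 𝓝[>] z₀, selfSimilarLHS m β (blowupProfile β C z₀) z
      < selfSimilarRHS m β r (blowupProfile β C z₀) z := by
  filter_upwards [nhdsWithin_le_nhds ((continuousAt_profileResidual hβ hβm).eventually_const_lt h),
    self_mem_nhdsWithin] with z hD hz
  rw [← sub_pos, selfSimilarRHS_sub_LHS_blowupProfile (by linarith) hC hz]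
  exact mul_pos (rpow_pos_of_pos (sub_pos.2 hz) _) hD

lemma eventually_selfSimilarRHS_lt_LHS (hβ : 1 < β) (hβm : β < 2 - m) (hC : 0 < C)
    (h : profileResidual m β r z₀ C z₀ < 0) :
    ∀ᶠ z in 𝓝[>] z₀, selfSimilarRHS m β r (blowupProfile β C z₀) z
      < selfSimilarLHS m β (blowupProfile β C z₀) z := by
  filter_upwards [nhdsWithin_le_nhds ((continuousAt_profileResidual hβ hβm).eventually_lt_const h),
    self_mem_nhdsWithin] with z hD hz
  rw [← sub_neg, selfSimilarRHS_sub_LHS_blowupProfile (by linarith) hC hz]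
  exact mul_neg_of_pos_of_neg (rpow_pos_of_pos (sub_pos.2 hz) _) hD

end SelfSimilar

theorem subsolution_supersolution_blowup_profile_general
    (m β r z₀ : ℝ) (hβ : 1 < β)
    (hβm : β < 2 - m) (hr : 0 < r) (hz₀ : 0 < z₀)
    (C₀ : ℝ) (hC₀ : C₀ = (z₀ * (β - m) / (2 * r * (β - 1) ^ 2)) ^ ((1:ℝ)/(β - 1))) :
    (∀ C > C₀, ∃ δ > 0, ∀ z ∈ Ioo z₀ (z₀ + δ),
      -(1/(β-1)) * ((C * (z - z₀) ^ (-(1/(β-1)))) +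
          ((β - m)/2) * z * deriv (fun y => C * (y - z₀) ^ (-(1/(β-1)))) z)
        < deriv (deriv (fun y => (C * (y - z₀) ^ (-(1/(β-1)))) ^ m)) z
          + r * (C * (z - z₀) ^ (-(1/(β-1)))) ^ β) ∧
    (∀ C, 0 < C → C < C₀ → ∃ δ > 0, ∀ z ∈ Ioo z₀ (z₀ + δ),
      -(1/(β-1)) * ((C * (z - z₀) ^ (-(1/(β-1)))) +
          ((β - m)/2) * z * deriv (fun y => C * (y - z₀) ^ (-(1/(β-1)))) z)
        > deriv (deriv (fun y => (C * (y - z₀) ^ (-(1/(β-1)))) ^ m)) z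
          + r * (C * (z - z₀) ^ (-(1/(β-1)))) ^ β) := by
  have hβm₀ : 0 < β - m := by linarith
  have hC₀_nonneg : 0 ≤ C₀ := hC₀ ▸ rpow_nonneg (by positivity) _
  have hβ₁ : 0 < β - 1 := sub_pos.2 hβ
  constructor
  · intro C hC
    have hC_pos : 0 < C := hC₀_nonneg.trans_lt hC
    refine exists_Ioo_forall_of_eventually_nhdsGT <|
      eventually_selfSimilarLHS_lt_RHS hβ hβm hC_pos ?_
    rw [profileResidual_self hβ hβm hr hz₀.le hC_pos hC₀]
    exact mul_pos (mul_pos hr hC_pos) (sub_pos.2 (rpow_lt_rpow hC₀_nonneg hC hβ₁))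
  · intro C hC_pos hC
    refine exists_Ioo_forall_of_eventually_nhdsGT <|
      eventually_selfSimilarRHS_lt_LHS hβ hβm hC_pos ?_
    rw [profileResidual_self hβ hβm hr hz₀.le hC_pos hC₀]
    exact mul_neg_of_pos_of_neg (mul_pos hr hC_pos) (sub_neg.2 (rpow_lt_rpow hC_pos.le hC hβ₁))

theorem subsolution_supersolution_blowup_profile
    (m β r z₀ : ℝ) (hm0 : 0 < m) (hm1 : m < 1) (hβ : 1 < β)
    (hβm : β < 2 - m) (hr : 0 < r) (hz₀ : 0 < z₀)
    (C₀ : ℝ) (hC₀ : C₀ = (z₀ * (β - m) / (2 * r * (β - 1) ^ 2)) ^ ((1:ℝ)/(β - 1))) :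
    (∀ C > C₀, ∃ δ > 0, ∀ z ∈ Ioo z₀ (z₀ + δ),
      -(1/(β-1)) * ((C * (z - z₀) ^ (-(1/(β-1)))) +
          ((β - m)/2) * z * deriv (fun y => C * (y - z₀) ^ (-(1/(β-1)))) z)
        < deriv (deriv (fun y => (C * (y - z₀) ^ (-(1/(β-1)))) ^ m)) z
          + r * (C * (z - z₀) ^ (-(1/(β-1)))) ^ β) ∧
    (∀ C, 0 < C → C < C₀ → ∃ δ > 0, ∀ z ∈ Ioo z₀ (z₀ + δ),
      -(1/(β-1)) * ((C * (z - z₀) ^ (-(1/(β-1)))) +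
          ((β - m)/2) * z * deriv (fun y => C * (y - z₀) ^ (-(1/(β-1)))) z)
        > deriv (deriv (fun y => (C * (y - z₀) ^ (-(1/(β-1)))) ^ m)) z
          + r * (C * (z - z₀) ^ (-(1/(β-1)))) ^ β) :=
  subsolution_supersolution_blowup_profile_general m β r z₀ hβ hβm hr hz₀ C₀ hC₀
end

section
/- Let m ∈ (0,1), β > 1, r > 0. Suppose ψ₁, ψ₂ : I → (0,∞) are C², decreasing, and are respectively a subsolution and a supersolution of the self-similar ODE on the interval I. If ψ₁(z₁) = ψ₂(z₁) and ψ₁'(z₁) > ψ₂'(z₁) at some z₁ ∈ I, then ψ₁(z) > ψ₂(z) for all z ∈ (z₁, ∞) ∩ I. -/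
open Real Set Filter Topology

/-!
Suppose `ψ₁ z₂ ≤ ψ₂ z₂` for some `z₂ > z₁`. Since `ψ₁` leaves `ψ₂` with the larger slope at `z₁`,
it lies strictly above `ψ₂` just to the right of `z₁`. Slide `ψ₂` to the right: for the shift
`l = z₂ - z₁` the shifted graph lies above `ψ₁` on `[z₁ + l, z₂]`, and for the smallest such
shift the two graphs touch at an interior point `ζ`, which we take to be the last contact point.
A decreasing supersolution stays a supersolution when shifted to the right, so near `ζ` the
subsolution `ψ₁` lies below the supersolution `ψ₂ (· - l)` and touches it at `ζ`. For the
difference `u` of their `m`-th powers the two differential inequalities give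
`u'' ≤ C (u + |u'|)` near `ζ`, while `u ≥ 0` and `u ζ = u' ζ = 0`; such a `u` vanishes on a
right neighbourhood of `ζ`, contradicting the choice of `ζ` as the last contact point.
-/

theorem AntitoneOn.deriv_nonpos_of_mem_nhds {f : ℝ → ℝ} {s : Set ℝ} {x : ℝ}
    (hf : AntitoneOn f s) (hs : s ∈ 𝓝 x) : deriv f x ≤ 0 := by
  rw [← derivWithin_of_mem_nhds hs]
  exact hf.derivWithin_nonpos

theorem eventually_lt_of_deriv_lt {f g : ℝ → ℝ} {x : ℝ} (hf : DifferentiableAt ℝ f x)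
    (hg : DifferentiableAt ℝ g x) (heq : f x = g x) (hlt : deriv g x < deriv f x) :
    ∀ᶠ y in 𝓝[>] x, g y < f y := by
  have hsign := eventually_nhdsWithin_sign_eq_of_deriv_pos (f := fun y => f y - g y)
    (by rw [deriv_fun_sub hf hg]; linarith) (by simp [heq])
  filter_upwards [nhdsWithin_le_nhds hsign, self_mem_nhdsWithin] with y hy hxy
  rw [sign_pos (sub_pos.mpr (mem_Ioi.mp hxy)), sign_eq_one_iff] at hy
  linarith

theorem sub_le_mul_sub_of_hasDerivAt_le {f f' : ℝ → ℝ} {a b C : ℝ} (hab : a ≤ b)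
    (hf : ∀ x ∈ Icc a b, HasDerivAt f (f' x) x) (hC : ∀ x ∈ Ioo a b, f' x ≤ C) :
    f b - f a ≤ C * (b - a) := by
  refine (convex_Icc a b).image_sub_le_mul_sub_of_deriv_le
    (fun x hx => (hf x hx).continuousAt.continuousWithinAt) (fun x hx => ?_) (fun x hx => ?_)
    a (left_mem_Icc.mpr hab) b (right_mem_Icc.mpr hab) hab
  all_goals rw [interior_Icc] at hx
  · exact (hf x (Ioo_subset_Icc_self hx)).differentiableAt.differentiableWithinAt
  · rw [(hf x (Ioo_subset_Icc_self hx)).deriv]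
    exact hC x hx

theorem nonpos_on_Icc_of_deriv2_le {u u' u'' : ℝ → ℝ} {a b K : ℝ} (hK : 0 ≤ K)
    (hsmall : K * (b - a) * (b - a + 1) < 1)
    (hu : ∀ s ∈ Icc a b, HasDerivAt u (u' s) s) (hu' : ∀ s ∈ Icc a b, HasDerivAt u' (u'' s) s)
    (h0 : u a = 0) (h0' : u' a = 0)
    (hle : ∀ s ∈ Icc a b, 0 < u' s → u'' s ≤ K * (u s + u' s)) :
    ∀ s ∈ Icc a b, u' s ≤ 0 := by
  intro s hs
  have hab : a ≤ b := hs.1.trans hs.2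
  obtain ⟨σ, hσ, hσmax⟩ := isCompact_Icc.exists_isMaxOn (nonempty_Icc.mpr hab)
    (fun x hx => (hu' x hx).continuousAt.continuousWithinAt)
  set B := u' σ
  -- If `B > 0`, then on the last stretch `(τ, σ)` where `u' > 0` the bound `u'' ≤ K (b - a + 1) B`
  -- is too small for `u'` to climb from `u' τ ≤ 0` to `B`.
  refine (hσmax hs).trans (not_lt.mp fun hB => ?_)
  have hu_le : ∀ x ∈ Icc a b, u x ≤ B * (b - a) := by
    intro x hx
    have := sub_le_mul_sub_of_hasDerivAt_le hx.1 (fun y hy => hu y ⟨hy.1, hy.2.trans hx.2⟩)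
      (fun y hy => hσmax ⟨hy.1.le, hy.2.le.trans hx.2⟩)
    rw [h0, sub_zero] at this
    exact this.trans (mul_le_mul_of_nonneg_left (by linarith [hx.2]) hB.le)
  have hS : IsCompact (Icc a σ ∩ u' ⁻¹' Iic 0) :=
    isCompact_Icc.of_isClosed_subset
      ((ContinuousOn.mono (fun x hx => (hu' x hx).continuousAt.continuousWithinAt)
        (Icc_subset_Icc_right hσ.2)).preimage_isClosed_of_isClosed isClosed_Icc isClosed_Iic)
      inter_subset_left
  obtain ⟨τ, ⟨hτ, hτ0⟩, hτmax⟩ :=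
    hS.exists_isGreatest ⟨a, left_mem_Icc.mpr hσ.1, mem_Iic.mpr h0'.le⟩
  have hpos : ∀ x ∈ Ioo τ σ, 0 < u' x := fun x hx =>
    not_le.mp fun h => hx.1.not_ge (hτmax ⟨⟨hτ.1.trans hx.1.le, hx.2.le⟩, h⟩)
  have hτσ : τ ∈ Icc a b := ⟨hτ.1, hτ.2.trans hσ.2⟩
  have hincr := sub_le_mul_sub_of_hasDerivAt_le (C := K * (B * (b - a) + B)) hτ.2
    (fun x hx => hu' x ⟨hτσ.1.trans hx.1, hx.2.trans hσ.2⟩)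
    (fun x hx => by
      have hx' : x ∈ Icc a b := ⟨hτσ.1.trans hx.1.le, hx.2.le.trans hσ.2⟩
      exact (hle x hx' (hpos x hx)).trans
        (mul_le_mul_of_nonneg_left (add_le_add (hu_le x hx') (hσmax hx')) hK))
  have hgap : K * (B * (b - a) + B) * (σ - τ) ≤ B * (K * (b - a) * (b - a + 1)) := by
    calc K * (B * (b - a) + B) * (σ - τ) ≤ K * (B * (b - a) + B) * (b - a) :=
          mul_le_mul_of_nonneg_left (by linarith [hσ.2, hτ.1])
            (mul_nonneg hK (by nlinarith))
      _ = B * (K * (b - a) * (b - a + 1)) := by ring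
  have hτ0' : u' τ ≤ 0 := hτ0
  linarith [mul_lt_of_lt_one_right hB hsmall]

theorem eventually_eq_zero_of_deriv2_le {u u' u'' : ℝ → ℝ} {a K : ℝ} (hK : 0 ≤ K)
    (hu : ∀ᶠ s in 𝓝[≥] a, HasDerivAt u (u' s) s)
    (hu' : ∀ᶠ s in 𝓝[≥] a, HasDerivAt u' (u'' s) s)
    (hnonneg : ∀ᶠ s in 𝓝[≥] a, 0 ≤ u s) (h0 : u a = 0) (h0' : u' a = 0)
    (hle : ∀ᶠ s in 𝓝[≥] a, u'' s ≤ K * (u s + |u' s|)) :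
    ∀ᶠ s in 𝓝[≥] a, u s = 0 := by
  obtain ⟨c, hac, hc⟩ := mem_nhdsGE_iff_exists_Icc_subset.mp (hu.and (hu'.and (hnonneg.and hle)))
  have hsmall : ∀ᶠ b in 𝓝 a, K * (b - a) * (b - a + 1) < 1 :=
    ((by fun_prop : Continuous fun b : ℝ => K * (b - a) * (b - a + 1)).tendsto a).eventually
      (gt_mem_nhds (by simp))
  obtain ⟨b, hb, hab, hbc⟩ :=
    ((hsmall.filter_mono nhdsWithin_le_nhds).and (Ioc_mem_nhdsGT hac)).exists
  have hc' : ∀ x ∈ Icc a b, _ := fun x hx => hc (Icc_subset_Icc_right hbc hx)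
  have hu'_nonpos := nonpos_on_Icc_of_deriv2_le hK hb (fun x hx => (hc' x hx).1)
    (fun x hx => (hc' x hx).2.1) h0 h0' (fun x hx hpos => by
      simpa only [abs_of_pos hpos] using (hc' x hx).2.2.2)
  filter_upwards [Icc_mem_nhdsGE hab] with s hs
  have := sub_le_mul_sub_of_hasDerivAt_le hs.1 (fun x hx => (hc' x ⟨hx.1, hx.2.trans hs.2⟩).1)
    (C := 0) (fun x hx => hu'_nonpos x ⟨hx.1.le, hx.2.le.trans hs.2⟩)
  linarith [(hc' s hs).2.2.1]

theorem ContDiffAt.exists_eventually_norm_sub_le {𝕂 E F X : Type*} [RCLike 𝕂]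
    [NormedAddCommGroup E] [NormedSpace 𝕂 E] [NormedAddCommGroup F] [NormedSpace 𝕂 F]
    {Φ : E → F} {p : E} (hΦ : ContDiffAt 𝕂 1 Φ p) {l : Filter X} {P Q : X → E}
    (hP : Tendsto P l (𝓝 p)) (hQ : Tendsto Q l (𝓝 p)) :
    ∃ K : NNReal, ∀ᶠ x in l, ‖Φ (P x) - Φ (Q x)‖ ≤ K * ‖P x - Q x‖ := by
  obtain ⟨K, t, ht, hlip⟩ := hΦ.exists_lipschitzOnWith
  refine ⟨K, ?_⟩
  filter_upwards [hP ht, hQ ht] with x hPx hQx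
  simpa only [dist_eq_norm] using hlip.dist_le_mul _ hPx _ hQx

theorem ContDiffAt.hasDerivAt_deriv {f : ℝ → ℝ} {x : ℝ} (hf : ContDiffAt ℝ 2 f x) :
    HasDerivAt (deriv f) (deriv (deriv f) x) x :=
  ((hf.derivWithin (m := 1) (by norm_num)).differentiableAt one_ne_zero).hasDerivAt

theorem deriv_eq_rpow_mul_deriv_rpow {f : ℝ → ℝ} {z m : ℝ} (hm : m ≠ 0)
    (hf : DifferentiableAt ℝ f z) (hz : 0 < f z) :
    deriv f z = (f z ^ m) ^ (1 / m - 1) * deriv (fun y => f y ^ m) z / m := by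
  have hpow : (f z ^ m) ^ (1 / m - 1) * f z ^ (m - 1) = 1 := by
    rw [← rpow_mul hz.le, ← rpow_add hz, show m * (1 / m - 1) + (m - 1) = 0 by field_simp; ring,
      rpow_zero]
  rw [(hf.hasDerivAt.rpow_const (p := m) (Or.inl hz.ne')).deriv, eq_div_iff hm]
  linear_combination (-(deriv f z * m)) * hpow

/-- `f' = Φ (f ^ m, (f ^ m)')` and `g' = Φ (g ^ m, (g ^ m)')` for a map `Φ` that is `C¹`, hence
Lipschitz, near the common value of these two jets at `ζ`. -/
theorem exists_abs_deriv_sub_le_of_rpow {f g : ℝ → ℝ} {ζ m : ℝ} (hm : m ≠ 0)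
    (hf : ContDiff ℝ 2 f) (hg : ContDiff ℝ 2 g) (hpos : 0 < f ζ) (heq : f ζ = g ζ)
    (htangent : deriv f ζ = deriv g ζ) :
    ∃ K : NNReal, ∀ᶠ z in 𝓝 ζ, |deriv f z - deriv g z|
      ≤ K * (|f z ^ m - g z ^ m| + |deriv (fun y => f y ^ m) z - deriv (fun y => g y ^ m) z|) := by
  set Φ : ℝ × ℝ → ℝ := fun p => p.1 ^ (1 / m - 1) * p.2 / m
  have hjet : ∀ {h : ℝ → ℝ}, ContDiff ℝ 2 h → 0 < h ζ →
      Tendsto (fun z => (h z ^ m, deriv (fun y => h y ^ m) z)) (𝓝 ζ)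
        (𝓝 (h ζ ^ m, deriv h ζ * m * h ζ ^ (m - 1))) := by
    intro h hh hζ
    have hC2 : ContDiffAt ℝ 2 (fun y => h y ^ m) ζ := hh.contDiffAt.rpow_const_of_ne hζ.ne'
    rw [← ((hh.differentiable (by norm_num) ζ).hasDerivAt.rpow_const (Or.inl hζ.ne')).deriv]
    exact (hC2.continuousAt.prodMk
      (hC2.derivWithin (m := 1) (by norm_num)).continuousAt).tendsto
  have hΦ : ContDiffAt ℝ 1 Φ (f ζ ^ m, deriv f ζ * m * f ζ ^ (m - 1)) :=
    ((contDiffAt_fst.rpow_const_of_ne (rpow_pos_of_pos hpos m).ne').mul contDiffAt_snd).div_const m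
  obtain ⟨K, hK⟩ := hΦ.exists_eventually_norm_sub_le (hjet hf hpos)
    (by rw [heq, htangent]; exact hjet hg (heq ▸ hpos))
  refine ⟨K, ?_⟩
  filter_upwards [hK, continuousAt_const.eventually_lt hf.continuous.continuousAt hpos,
    continuousAt_const.eventually_lt hg.continuous.continuousAt (heq ▸ hpos)] with z hz hfz hgz
  rw [deriv_eq_rpow_mul_deriv_rpow hm (hf.differentiable (by norm_num) z) hfz,
    deriv_eq_rpow_mul_deriv_rpow hm (hg.differentiable (by norm_num) z) hgz]
  simp only [Prod.mk_sub_mk, Prod.norm_mk, Real.norm_eq_abs] at hz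
  exact hz.trans (mul_le_mul_of_nonneg_left (max_le_add_of_nonneg (abs_nonneg _) (abs_nonneg _))
    K.coe_nonneg)

def IsSubsolutionAt (m β r : ℝ) (ψ : ℝ → ℝ) (z : ℝ) : Prop :=
  -(1/(β-1)) * (ψ z + ((β - m)/2) * z * deriv ψ z)
    ≤ deriv (deriv (fun y => ψ y ^ m)) z + r * ψ z ^ β

def IsSupersolutionAt (m β r : ℝ) (ψ : ℝ → ℝ) (z : ℝ) : Prop :=
  -(1/(β-1)) * (ψ z + ((β - m)/2) * z * deriv ψ z)
    ≥ deriv (deriv (fun y => ψ y ^ m)) z + r * ψ z ^ β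

section

variable {m β r : ℝ}

theorem IsSupersolutionAt.comp_sub_const {ψ : ℝ → ℝ} {z l : ℝ} (hβ : 1 < β) (hmβ : m ≤ β)
    (hl : 0 ≤ l) (h : IsSupersolutionAt m β r ψ (z - l)) (hψ' : deriv ψ (z - l) ≤ 0) :
    IsSupersolutionAt m β r (fun y => ψ (y - l)) z := by
  have hshift : deriv (fun y => ψ (y - l) ^ m) = fun y => deriv (fun y => ψ y ^ m) (y - l) :=
    funext fun y => deriv_comp_sub_const (fun y => ψ y ^ m) l y
  have hdrift : 0 ≤ 1 / (β - 1) * ((β - m) / 2) * l :=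
    mul_nonneg (mul_nonneg (one_div_nonneg.mpr (by linarith)) (by linarith)) hl
  unfold IsSupersolutionAt at h ⊢
  rw [hshift, deriv_comp_sub_const, deriv_comp_sub_const]
  nlinarith [mul_nonpos_of_nonneg_of_nonpos hdrift hψ']

theorem IsSupersolutionAt.deriv_deriv_rpow_sub_le {φ ψ : ℝ → ℝ} {z : ℝ} (hβ : 1 < β)
    (hr : 0 ≤ r) (hφ : IsSupersolutionAt m β r φ z) (hψ : IsSubsolutionAt m β r ψ z)
    (hψ0 : 0 ≤ ψ z) (hψφ : ψ z ≤ φ z) :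
    deriv (deriv (fun y => φ y ^ m)) z - deriv (deriv (fun y => ψ y ^ m)) z
      ≤ 1 / (β - 1) * |(β - m) / 2| * |z| * |deriv φ z - deriv ψ z| := by
  have hb : 0 ≤ 1 / (β - 1) := one_div_nonneg.mpr (by linarith)
  have hpow : ψ z ^ β ≤ φ z ^ β := rpow_le_rpow hψ0 hψφ (by linarith)
  have hdrift : -((β - m) / 2 * z * (deriv φ z - deriv ψ z))
      ≤ |(β - m) / 2| * |z| * |deriv φ z - deriv ψ z| := by
    rw [← abs_mul, ← abs_mul]
    exact neg_le_abs _
  unfold IsSupersolutionAt at hφ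
  unfold IsSubsolutionAt at hψ
  nlinarith [mul_le_mul_of_nonneg_left hdrift hb, mul_nonneg hb (sub_nonneg.mpr hψφ),
    mul_le_mul_of_nonneg_left hpow hr]

theorem exists_deriv_deriv_rpow_sub_le (hm : 0 < m) (hβ : 1 < β) (hr : 0 ≤ r) {ψ φ : ℝ → ℝ}
    {ζ : ℝ} (hψ : ContDiff ℝ 2 ψ) (hφ : ContDiff ℝ 2 φ)
    (hsub : ∀ᶠ z in 𝓝 ζ, IsSubsolutionAt m β r ψ z)
    (hsup : ∀ᶠ z in 𝓝 ζ, IsSupersolutionAt m β r φ z)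
    (hle : ∀ᶠ z in 𝓝 ζ, ψ z ≤ φ z) (hpos : 0 < ψ ζ) (heq : ψ ζ = φ ζ)
    (htangent : deriv φ ζ = deriv ψ ζ) :
    ∃ C, 0 ≤ C ∧ ∀ᶠ z in 𝓝 ζ,
      deriv (deriv (fun y => φ y ^ m)) z - deriv (deriv (fun y => ψ y ^ m)) z
        ≤ C * ((φ z ^ m - ψ z ^ m)
          + |deriv (fun y => φ y ^ m) z - deriv (fun y => ψ y ^ m) z|) := by
  obtain ⟨K, hK⟩ := exists_abs_deriv_sub_le_of_rpow hm.ne' hφ hψ (heq ▸ hpos) heq.symm htangent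
  refine ⟨1 / (β - 1) * |(β - m) / 2| * (|ζ| + 1) * K,
    mul_nonneg (by have := one_div_pos.mpr (sub_pos.mpr hβ); positivity) K.coe_nonneg, ?_⟩
  filter_upwards [hsub, hsup, hle, continuousAt_const.eventually_lt hψ.continuous.continuousAt hpos,
    hK, continuous_abs.continuousAt.eventually_lt continuousAt_const (lt_add_one |ζ|)]
    with z hsubz hsupz hlez hψz hKz hzζ
  rw [← abs_of_nonneg (sub_nonneg.mpr (rpow_le_rpow hψz.le hlez hm.le))]
  calc _ ≤ 1 / (β - 1) * |(β - m) / 2| * |z| * |deriv φ z - deriv ψ z| :=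
        hsupz.deriv_deriv_rpow_sub_le hβ hr hsubz hψz.le hlez
    _ ≤ 1 / (β - 1) * |(β - m) / 2| * (|ζ| + 1) * (K * (|φ z ^ m - ψ z ^ m|
          + |deriv (fun y => φ y ^ m) z - deriv (fun y => ψ y ^ m) z|)) := by
        have := one_div_pos.mpr (sub_pos.mpr hβ)
        gcongr
    _ = _ := by ring

theorem eventually_eq_of_subsolution_le_supersolution (hm : 0 < m) (hβ : 1 < β) (hr : 0 ≤ r)
    {ψ φ : ℝ → ℝ} {ζ : ℝ} (hψ : ContDiff ℝ 2 ψ) (hφ : ContDiff ℝ 2 φ)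
    (hsub : ∀ᶠ z in 𝓝 ζ, IsSubsolutionAt m β r ψ z)
    (hsup : ∀ᶠ z in 𝓝 ζ, IsSupersolutionAt m β r φ z)
    (hle : ∀ᶠ z in 𝓝 ζ, ψ z ≤ φ z) (hpos : 0 < ψ ζ) (heq : ψ ζ = φ ζ) :
    ∀ᶠ z in 𝓝[≥] ζ, ψ z = φ z := by
  have hψpos : ∀ᶠ z in 𝓝 ζ, 0 < ψ z :=
    continuousAt_const.eventually_lt hψ.continuous.continuousAt hpos
  have hφpos : ∀ᶠ z in 𝓝 ζ, 0 < φ z :=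
    continuousAt_const.eventually_lt hφ.continuous.continuousAt (heq ▸ hpos)
  have htangent : deriv φ ζ = deriv ψ ζ := by
    have hmin : IsLocalMin (fun z => φ z - ψ z) ζ := hle.mono fun z hz => by simpa [heq] using hz
    have := hmin.deriv_eq_zero
    rw [deriv_fun_sub (hφ.differentiable (by norm_num) ζ) (hψ.differentiable (by norm_num) ζ)]
      at this
    linarith
  obtain ⟨C, hC, hsecond⟩ :=
    exists_deriv_deriv_rpow_sub_le hm hβ hr hψ hφ hsub hsup hle hpos heq htangent
  have hV : ∀ᶠ z in 𝓝 ζ, ContDiffAt ℝ 2 (fun y => φ y ^ m) z :=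
    hφpos.mono fun z hz => hφ.contDiffAt.rpow_const_of_ne hz.ne'
  have hW : ∀ᶠ z in 𝓝 ζ, ContDiffAt ℝ 2 (fun y => ψ y ^ m) z :=
    hψpos.mono fun z hz => hψ.contDiffAt.rpow_const_of_ne hz.ne'
  have hderiv_rpow : deriv (fun y => φ y ^ m) ζ = deriv (fun y => ψ y ^ m) ζ := by
    rw [((hφ.differentiable (by norm_num) ζ).hasDerivAt.rpow_const (Or.inl (heq ▸ hpos).ne')).deriv,
      ((hψ.differentiable (by norm_num) ζ).hasDerivAt.rpow_const (Or.inl hpos.ne')).deriv,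
      heq, htangent]
  have hzero := eventually_eq_zero_of_deriv2_le hC
    (u' := fun z => deriv (fun y => φ y ^ m) z - deriv (fun y => ψ y ^ m) z)
    ((hV.and hW).filter_mono nhdsWithin_le_nhds |>.mono fun z h =>
      (h.1.differentiableAt (by norm_num)).hasDerivAt.sub
        (h.2.differentiableAt (by norm_num)).hasDerivAt)
    ((hV.and hW).filter_mono nhdsWithin_le_nhds |>.mono fun z h =>
      h.1.hasDerivAt_deriv.sub h.2.hasDerivAt_deriv)
    ((hle.and hψpos).filter_mono nhdsWithin_le_nhds |>.mono fun z h =>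
      sub_nonneg.mpr (rpow_le_rpow h.2.le h.1 hm.le))
    (by simp [heq]) (sub_eq_zero.mpr hderiv_rpow) (hsecond.filter_mono nhdsWithin_le_nhds)
  filter_upwards [hzero, hψpos.filter_mono nhdsWithin_le_nhds,
    hφpos.filter_mono nhdsWithin_le_nhds] with z hz hψz hφz
  exact (rpow_left_inj hψz.le hφz.le hm.ne').mp (sub_eq_zero.mp hz).symm

end

theorem eventually_forall_le_shift {f g : ℝ → ℝ} {a b l : ℝ} (hf : Continuous f)
    (hg : Continuous g) (hfa : StrictAntiOn f (Icc a b)) (ha : f a = g a) (hl : 0 < l)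
    (hlt : ∀ z ∈ Icc (a + l) b, f z < g (z - l)) :
    ∀ᶠ l' in 𝓝 l, ∀ z ∈ Icc a b, f z ≤ g (max (z - l') a) := by
  have hfar : ∀ᶠ l' in 𝓝 l, ∀ z ∈ Icc (a + l / 2) b, f z < g (max (z - l') a) := by
    refine isCompact_Icc.eventually_forall_of_forall_eventually fun z hz => ?_
    have hgap : f z < g (max (z - l) a) := by
      rcases le_or_gt (a + l) z with h | h
      · rw [max_eq_left (by linarith)]
        exact hlt z ⟨h, hz.2⟩
      · rw [max_eq_right (by linarith), ← ha]
        exact hfa ⟨le_rfl, by linarith [hz.1, hz.2]⟩ ⟨by linarith [hz.1], hz.2⟩ (by linarith [hz.1])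
    exact (show Continuous fun p : ℝ × ℝ => f p.2 by fun_prop).continuousAt.eventually_lt
      (show Continuous fun p : ℝ × ℝ => g (max (p.2 - p.1) a) by fun_prop).continuousAt hgap
  filter_upwards [hfar, eventually_gt_nhds (half_lt_self hl)] with l' hl' hll' z hz
  rcases le_or_gt (a + l / 2) z with h | h
  · exact (hl' z ⟨h, hz.2⟩).le
  · rw [max_eq_right (by linarith), ← ha]
    exact hfa.antitoneOn ⟨le_rfl, hz.1.trans hz.2⟩ hz hz.1

theorem exists_least_shift {f g : ℝ → ℝ} {a b c : ℝ} (hf : Continuous f) (hg : Continuous g)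
    (hfa : StrictAntiOn f (Icc a b)) (ha : f a = g a) (hc : c ∈ Ioo a b) (hgc : g c < f c) :
    ∃ l, 0 < l ∧ (∀ z ∈ Icc (a + l) b, f z ≤ g (z - l)) ∧
      ∃ z ∈ Icc (a + l) b, f z = g (z - l) := by
  -- On `[a, a + l]` the shift of `g` is continued by the constant `g a = f a`, which lies above
  -- `f` there; this makes the set of admissible shifts closed.
  set G := {l ∈ Icc 0 (b - a) | ∀ z ∈ Icc a b, f z ≤ g (max (z - l) a)}
  have hGclosed : IsClosed G := by
    refine isClosed_Icc.inter ?_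
    change IsClosed {l : ℝ | ∀ z ∈ Icc a b, f z ≤ g (max (z - l) a)}
    simp only [Set.ofPred_forall]
    exact isClosed_biInter fun z _ => isClosed_le continuous_const (by fun_prop)
  have hfull : b - a ∈ G := by
    refine ⟨⟨by linarith [hc.1, hc.2], le_rfl⟩, fun z hz => ?_⟩
    rw [max_eq_right (by linarith [hz.2]), ← ha]
    exact hfa.antitoneOn ⟨le_rfl, hz.1.trans hz.2⟩ hz hz.1
  have hGbdd : BddBelow G := ⟨0, fun x hx => hx.1.1⟩
  obtain ⟨hl, hbelow⟩ : sInf G ∈ G := hGclosed.csInf_mem ⟨_, hfull⟩ hGbdd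
  set l := sInf G
  have hl0 : 0 < l := by
    refine lt_of_le_of_ne hl.1 fun h0 => ?_
    have := hbelow c (Ioo_subset_Icc_self hc)
    rw [← h0, sub_zero, max_eq_left hc.1.le] at this
    linarith
  have hbelow' : ∀ z ∈ Icc (a + l) b, f z ≤ g (z - l) := fun z hz => by
    simpa only [max_eq_left (show a ≤ z - l by linarith [hz.1])] using
      hbelow z ⟨by linarith [hz.1], hz.2⟩
  refine ⟨l, hl0, hbelow', not_forall_not.mp fun htouch => ?_⟩
  have hlt : ∀ z ∈ Icc (a + l) b, f z < g (z - l) := fun z hz =>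
    lt_of_le_of_ne (hbelow' z hz) fun h => htouch z ⟨hz, h⟩
  obtain ⟨l', hl'below, hl'⟩ := ((eventually_forall_le_shift hf hg hfa ha hl0 hlt).filter_mono
    nhdsWithin_le_nhds |>.and (Ioo_mem_nhdsLT hl0)).exists
  exact hl'.2.not_ge (csInf_le hGbdd ⟨⟨hl'.1.le, hl'.2.le.trans hl.2⟩, hl'below⟩)

theorem exists_last_touching_shift {f g : ℝ → ℝ} {a b c : ℝ} (hf : Continuous f)
    (hg : Continuous g) (hfa : StrictAntiOn f (Icc a b)) (hga : StrictAntiOn g (Icc a b))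
    (ha : f a = g a) (hb : f b ≤ g b) (hc : c ∈ Ioo a b) (hgc : g c < f c) :
    ∃ l ζ, 0 < l ∧ a + l < ζ ∧ ζ < b ∧ f ζ = g (ζ - l) ∧
      (∀ z ∈ Icc (a + l) b, f z ≤ g (z - l)) ∧ ∀ z ∈ Ioc ζ b, f z < g (z - l) := by
  obtain ⟨l, hl0, hbelow, htouch⟩ := exists_least_shift hf hg hfa ha hc hgc
  set T := {z ∈ Icc (a + l) b | f z = g (z - l)}
  have hTbdd : BddAbove T := ⟨b, fun z hz => hz.1.2⟩
  obtain ⟨hζ, hζeq⟩ : sSup T ∈ T :=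
    (isClosed_Icc.inter (isClosed_eq hf (by fun_prop))).csSup_mem htouch hTbdd
  set ζ := sSup T
  refine ⟨l, ζ, hl0, lt_of_le_of_ne hζ.1 fun h => ?_, lt_of_le_of_ne hζ.2 fun h => ?_, hζeq,
    hbelow, fun z hz => lt_of_le_of_ne (hbelow z ⟨hζ.1.trans hz.1.le, hz.2⟩) fun h =>
      hz.1.not_ge (le_csSup hTbdd ⟨⟨hζ.1.trans hz.1.le, hz.2⟩, h⟩)⟩
  · have hlb : a + l ≤ b := h ▸ hζ.2
    rw [← h, add_sub_cancel_right, ← ha] at hζeq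
    exact (hfa ⟨le_rfl, by linarith⟩ ⟨by linarith, hlb⟩ (by linarith)).ne hζeq
  · have hlb : a + l ≤ b := h ▸ hζ.1
    rw [h] at hζeq
    linarith [hga ⟨by linarith, by linarith⟩ ⟨by linarith, le_rfl⟩ (sub_lt_self b hl0)]

theorem comparison_principle_sub_super_general
    (m β r : ℝ) (hm0 : 0 < m) (hm1 : m < 1) (hβ : 1 < β) (hr : 0 < r)
    (I : Set ℝ) (hI : I.OrdConnected)
    (ψ₁ ψ₂ : ℝ → ℝ) (h1 : ContDiff ℝ 2 ψ₁) (h2 : ContDiff ℝ 2 ψ₂)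
    (hpos1 : ∀ z ∈ I, 0 < ψ₁ z)
    (hdec1 : StrictAntiOn ψ₁ I) (hdec2 : StrictAntiOn ψ₂ I)
    (hsub : ∀ z ∈ I, -(1/(β-1)) * (ψ₁ z + ((β - m)/2) * z * deriv ψ₁ z)
      ≤ deriv (deriv (fun y => ψ₁ y ^ m)) z + r * ψ₁ z ^ β)
    (hsup : ∀ z ∈ I, -(1/(β-1)) * (ψ₂ z + ((β - m)/2) * z * deriv ψ₂ z)
      ≥ deriv (deriv (fun y => ψ₂ y ^ m)) z + r * ψ₂ z ^ β)
    (z₁ : ℝ) (hz₁ : z₁ ∈ I) (heq : ψ₁ z₁ = ψ₂ z₁)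
    (hslope : deriv ψ₁ z₁ > deriv ψ₂ z₁) :
    ∀ z ∈ Ioi z₁ ∩ I, ψ₁ z > ψ₂ z := by
  rintro z₂ ⟨hz₂, hz₂I⟩
  by_contra hle
  have hJ : Icc z₁ z₂ ⊆ I := hI.out hz₁ hz₂I
  obtain ⟨c, hgc, hc⟩ := ((eventually_lt_of_deriv_lt (h1.differentiable (by norm_num) z₁)
    (h2.differentiable (by norm_num) z₁) heq hslope).and (Ioo_mem_nhdsGT hz₂)).exists
  obtain ⟨l, ζ, hl, hlζ, hζ, htouch, hbelow, hstrict⟩ := exists_last_touching_shift h1.continuous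
    h2.continuous (hdec1.mono hJ) (hdec2.mono hJ) heq (not_lt.mp hle) hc hgc
  have hζJ : Icc (z₁ + l) z₂ ∈ 𝓝 ζ := Icc_mem_nhds hlζ hζ
  have hsup_shift : ∀ᶠ z in 𝓝 ζ, IsSupersolutionAt m β r (fun y => ψ₂ (y - l)) z := by
    filter_upwards [Ioo_mem_nhds hlζ hζ] with z hz
    have hzl : z - l ∈ Ioo z₁ z₂ := ⟨by linarith [hz.1], by linarith [hz.2]⟩
    exact IsSupersolutionAt.comp_sub_const hβ (by linarith) hl.le
      (hsup _ (hJ (Ioo_subset_Icc_self hzl)))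
      (hdec2.antitoneOn.deriv_nonpos_of_mem_nhds (mem_of_superset (Icc_mem_nhds hzl.1 hzl.2) hJ))
  have hJζ : Icc (z₁ + l) z₂ ⊆ I := fun z hz => hJ ⟨by linarith [hz.1], hz.2⟩
  have hcontact := eventually_eq_of_subsolution_le_supersolution hm0 hβ hr.le h1
    (h2.comp (contDiff_id.sub contDiff_const)) (mem_of_superset hζJ fun z hz => hsub z (hJζ hz))
    hsup_shift (mem_of_superset hζJ hbelow) (hpos1 ζ (hJζ (mem_of_mem_nhds hζJ))) htouch
  obtain ⟨z, hz, hzζ⟩ :=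
    ((hcontact.filter_mono (nhdsWithin_mono _ Ioi_subset_Ici_self)).and (Ioc_mem_nhdsGT hζ)).exists
  exact (hstrict z hzζ).ne hz

theorem comparison_principle_sub_super
    (m β r : ℝ) (hm0 : 0 < m) (hm1 : m < 1) (hβ : 1 < β) (hr : 0 < r)
    (I : Set ℝ) (hI : I.OrdConnected)
    (ψ₁ ψ₂ : ℝ → ℝ) (h1 : ContDiff ℝ 2 ψ₁) (h2 : ContDiff ℝ 2 ψ₂)
    (hpos1 : ∀ z ∈ I, 0 < ψ₁ z) (hpos2 : ∀ z ∈ I, 0 < ψ₂ z)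
    (hdec1 : StrictAntiOn ψ₁ I) (hdec2 : StrictAntiOn ψ₂ I)
    (hsub : ∀ z ∈ I, -(1/(β-1)) * (ψ₁ z + ((β - m)/2) * z * deriv ψ₁ z)
      ≤ deriv (deriv (fun y => ψ₁ y ^ m)) z + r * ψ₁ z ^ β)
    (hsup : ∀ z ∈ I, -(1/(β-1)) * (ψ₂ z + ((β - m)/2) * z * deriv ψ₂ z)
      ≥ deriv (deriv (fun y => ψ₂ y ^ m)) z + r * ψ₂ z ^ β)
    (z₁ : ℝ) (hz₁ : z₁ ∈ I) (heq : ψ₁ z₁ = ψ₂ z₁)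
    (hslope : deriv ψ₁ z₁ > deriv ψ₂ z₁) :
    ∀ z ∈ Ioi z₁ ∩ I, ψ₁ z > ψ₂ z :=
  comparison_principle_sub_super_general m β r hm0 hm1 hβ hr I hI ψ₁ ψ₂ h1 h2 hpos1 hdec1 hdec2 hsub
    hsup z₁ hz₁ heq hslope
end

section
/- Let m ∈ (0,1), β > 1 with β < 2−m, r > 0, and let φ : (z₀, ∞) → (0,∞) be a decreasing C² solution of the self-similar ODE with φ(z) ≤ K·z^{−2/(1−m)} for large z (for some K>0) and z φ(z) → 0 as z → +∞. Then (φ^m)'(z) → 0 as z → +∞, and moreover for large z one has the bound 0 > m φ(z)^{m−1} φ'(z) ≥ −c₂ z φ(z), where c₂ = (β−m)/(2(β−1)). In particular |φ'(z)| ≤ (c₂/m) z φ(z)^{2−m} for large z. -/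
/-!
With `ψ = φ^m`, `c₁ = (2-β+m)/(2(β-1))` and `c₂ = (β-m)/(2(β-1))`, the ODE reads
`ψ'' + c₂ (zφ)' = -(c₁ φ + r φ^β) ≤ 0`, so `ψ' + c₂ z φ` is nonincreasing. If it ever
became negative, `ψ'` would stay below a negative constant and `ψ > 0` would eventually turn
negative; hence `-c₂ z φ ≤ ψ' ≤ 0`, and `z φ → 0` squeezes `ψ'` to `0`.
-/

open Real Set Filter

lemma nonneg_of_bddBelow_of_deriv_le {f : ℝ → ℝ} {a c : ℝ}
    (hf : ∀ x ∈ Ici a, DifferentiableAt ℝ f x) (hb : BddBelow (f '' Ici a))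
    (hc : ∀ x ∈ Ioi a, deriv f x ≤ c) : 0 ≤ c := by
  by_contra! hc_neg
  obtain ⟨b, hb⟩ := hb
  have hgrowth : ∀ y ∈ Ici a, f y ≤ f a + c * (y - a) := fun y hy => by
    have := (convex_Ici a).image_sub_le_mul_sub_of_deriv_le
      (fun x hx => (hf x hx).continuousAt.continuousWithinAt)
      (fun x hx => (hf x (interior_subset hx)).differentiableWithinAt)
      (by rwa [interior_Ici]) a self_mem_Ici y hy hy
    linarith
  have hlin : Tendsto (fun y => f a + c * (y - a)) atTop atBot :=
    tendsto_atBot_add_const_left _ _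
      ((tendsto_atTop_add_const_right _ _ tendsto_id).const_mul_atTop_of_neg hc_neg)
  obtain ⟨y, hya, hyb⟩ :=
    ((eventually_ge_atTop a).and (hlin.eventually (eventually_lt_atBot b))).exists
  exact (hgrowth y hya).not_gt (hyb.trans_le (hb ⟨y, hya, rfl⟩))

lemma nonneg_of_antitoneOn_of_deriv_le {ψ F : ℝ → ℝ} {a x : ℝ}
    (hψ : ∀ y ∈ Ioi a, DifferentiableAt ℝ ψ y) (hb : BddBelow (ψ '' Ioi a))
    (hF : AntitoneOn F (Ioi a)) (hle : ∀ y ∈ Ioi a, deriv ψ y ≤ F y) (hx : x ∈ Ioi a) :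
    0 ≤ F x := by
  have hsub : Ici x ⊆ Ioi a := Ici_subset_Ioi.2 hx
  refine nonneg_of_bddBelow_of_deriv_le (fun y hy => hψ y (hsub hy))
    (hb.mono (image_mono hsub)) fun y hy => ?_
  exact (hle y (hsub (mem_Ici_of_Ioi hy))).trans (hF hx (hsub (mem_Ici_of_Ioi hy)) hy.le)

lemma deriv_nonpos_of_antitoneOn {g : ℝ → ℝ} {s : Set ℝ} {x : ℝ} (hs : IsOpen s)
    (hg : AntitoneOn g s) (hx : x ∈ s) : deriv g x ≤ 0 := by
  rw [← derivWithin_of_isOpen hs hx]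
  exact hg.derivWithin_nonpos

lemma differentiableAt_deriv_rpow_const {φ : ℝ → ℝ} {s : Set ℝ} {x : ℝ} (hs : IsOpen s)
    (hφ : ContDiffOn ℝ 2 φ s) (hne : ∀ y ∈ s, φ y ≠ 0) (m : ℝ) (hx : x ∈ s) :
    DifferentiableAt ℝ (deriv fun y => φ y ^ m) x :=
  (((hφ.rpow_const_of_ne hne).deriv_of_isOpen hs (m := 1) (by norm_num)).differentiableOn
    (by norm_num)).differentiableAt (hs.mem_nhds hx)

lemma abs_le_of_neg_mul_le_mul_rpow_mul {m c z x d : ℝ} (hm : 0 < m) (hx : 0 < x)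
    (hneg : m * x ^ (m - 1) * d < 0) (hlow : -(c * z * x) ≤ m * x ^ (m - 1) * d) :
    |d| ≤ c / m * z * x ^ (2 - m) := by
  have hA : 0 < m * x ^ (m - 1) := by positivity
  have hx_split : x ^ (m - 1) * x ^ (2 - m) = x := by
    rw [← rpow_add hx]; norm_num
  rw [abs_of_neg (neg_of_mul_neg_right hneg hA.le), ← mul_le_mul_iff_of_pos_left hA]
  calc m * x ^ (m - 1) * -d ≤ c * z * (x ^ (m - 1) * x ^ (2 - m)) := by rw [hx_split]; linarith
    _ = m * x ^ (m - 1) * (c / m * z * x ^ (2 - m)) := by field_simp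

lemma selfSimilar_ode_divergence_form {m β r z u du d2v : ℝ} (hβ : β ≠ 1)
    (h : -(1 / (β - 1)) * (u + ((β - m) / 2) * z * du) = d2v + r * u ^ β) :
    d2v + (β - m) / (2 * (β - 1)) * (u + z * du)
      = -((2 - β + m) / (2 * (β - 1)) * u + r * u ^ β) := by
  have hβ' : β - 1 ≠ 0 := sub_ne_zero.2 hβ
  field_simp at h ⊢
  linarith

def SolvesSelfSimilarODE (m β r z₀ : ℝ) (φ : ℝ → ℝ) : Prop :=
  ∀ z ∈ Ioi z₀, -(1/(β-1)) * (φ z + ((β - m)/2) * z * deriv φ z)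
    = deriv (deriv (fun y => φ y ^ m)) z + r * φ z ^ β

lemma neg_mul_le_deriv_rpow {m β r z₀ : ℝ} {φ : ℝ → ℝ} (hβ : 1 < β) (hmβ : m ≤ β)
    (hβm : β ≤ 2 + m) (hr : 0 ≤ r) (hz₀ : 0 ≤ z₀) (hφ : ContDiff ℝ 2 φ)
    (hpos : ∀ z ∈ Ioi z₀, 0 < φ z) (hODE : SolvesSelfSimilarODE m β r z₀ φ)
    {z : ℝ} (hz : z ∈ Ioi z₀) :
    -((β - m) / (2 * (β - 1)) * z * φ z) ≤ deriv (fun y => φ y ^ m) z := by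
  set c₂ := (β - m) / (2 * (β - 1))
  set F := fun y => deriv (fun y => φ y ^ m) y + c₂ * (y * φ y)
  have hc₂ : 0 ≤ c₂ := div_nonneg (by linarith) (by linarith)
  have hc₁ : 0 ≤ (2 - β + m) / (2 * (β - 1)) := div_nonneg (by linarith) (by linarith)
  have hφd : Differentiable ℝ φ := hφ.differentiable (by norm_num)
  have hψ'd : ∀ y ∈ Ioi z₀, DifferentiableAt ℝ (deriv fun y => φ y ^ m) y := fun y hy =>
    differentiableAt_deriv_rpow_const isOpen_Ioi hφ.contDiffOn (fun y hy => (hpos y hy).ne') m hy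
  have hF_deriv : ∀ y ∈ Ioi z₀,
      HasDerivAt F (-((2 - β + m) / (2 * (β - 1)) * φ y + r * φ y ^ β)) y := fun y hy =>
    ((hψ'd y hy).hasDerivAt.add
      (((hasDerivAt_id y).mul (hφd y).hasDerivAt).const_mul c₂)).congr_deriv
      (by simpa using selfSimilar_ode_divergence_form hβ.ne' (hODE y hy))
  have hF_anti : AntitoneOn F (Ioi z₀) := by
    refine antitoneOn_of_hasDerivWithinAt_nonpos (convex_Ioi z₀)
      (f' := fun y => -((2 - β + m) / (2 * (β - 1)) * φ y + r * φ y ^ β))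
      (fun y hy => (hF_deriv y hy).continuousAt.continuousWithinAt)
      (fun y hy => ?_) fun y hy => ?_
    all_goals rw [interior_Ioi] at hy
    · exact (hF_deriv y hy).hasDerivWithinAt
    · exact neg_nonpos.2 (add_nonneg (mul_nonneg hc₁ (hpos y hy).le)
        (mul_nonneg hr (rpow_nonneg (hpos y hy).le β)))
  have hψ_bdd : BddBelow ((fun y => φ y ^ m) '' Ioi z₀) :=
    ⟨0, by rintro _ ⟨y, hy, rfl⟩; exact (rpow_pos_of_pos (hpos y hy) m).le⟩
  have hψd : ∀ y ∈ Ioi z₀, DifferentiableAt ℝ (fun y => φ y ^ m) y := fun y hy =>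
    (hφd y).rpow_const (Or.inl (hpos y hy).ne')
  have hF_nonneg := nonneg_of_antitoneOn_of_deriv_le hψd hψ_bdd hF_anti (fun y hy => by
    have : 0 ≤ c₂ * (y * φ y) := mul_nonneg hc₂ (mul_pos (hz₀.trans_lt hy) (hpos y hy)).le
    linarith) hz
  linarith

/-- At a zero of `(φ^m)' ≤ 0` both `φ'` and `(φ^m)''` vanish, and the ODE would then read
`-φ/(β-1) = r φ^β`. -/
lemma deriv_rpow_lt_zero {m β r z₀ : ℝ} {φ : ℝ → ℝ} (hm : 0 < m) (hβ : 1 < β)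
    (hr : 0 ≤ r) (hφ : Differentiable ℝ φ) (hpos : ∀ z ∈ Ioi z₀, 0 < φ z)
    (hODE : SolvesSelfSimilarODE m β r z₀ φ)
    (hnonpos : ∀ z ∈ Ioi z₀, deriv (fun y => φ y ^ m) z ≤ 0) {z : ℝ}
    (hz : z ∈ Ioi z₀) :
    deriv (fun y => φ y ^ m) z < 0 := by
  refine (hnonpos z hz).lt_of_ne fun hzero => ?_
  have hmax : IsLocalMax (deriv fun y => φ y ^ m) z :=
    mem_of_superset (isOpen_Ioi.mem_nhds hz) fun y hy => (hnonpos y hy).trans hzero.ge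
  have hφ' : deriv φ z = 0 := by
    rw [deriv_rpow_const (hφ z) (Or.inl (hpos z hz).ne')] at hzero
    simpa [hm.ne', (rpow_pos_of_pos (hpos z hz) _).ne'] using hzero
  have h := hODE z hz
  rw [hφ', hmax.deriv_eq_zero] at h
  have hcoef : 0 < 1 / (β - 1) := one_div_pos.2 (by linarith)
  have hφz := hpos z hz
  have hφβ := rpow_pos_of_pos hφz β
  nlinarith

theorem tail_derivative_estimates_general
    (m β r z₀ : ℝ) (hm0 : 0 < m) (hβ : 1 < β) (hβm : β < 2 - m)
    (hr : 0 < r) (hz₀ : 0 < z₀)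
    (φ : ℝ → ℝ) (hφ : ContDiff ℝ 2 φ)
    (hpos : ∀ z ∈ Ioi z₀, 0 < φ z)
    (hdec : StrictAntiOn φ (Ioi z₀))
    (hODE : ∀ z ∈ Ioi z₀, -(1/(β-1)) * (φ z + ((β - m)/2) * z * deriv φ z)
      = deriv (deriv (fun y => φ y ^ m)) z + r * φ z ^ β)
    (hzφ : Tendsto (fun z => z * φ z) atTop (nhds 0)) :
    Tendsto (deriv (fun z => φ z ^ m)) atTop (nhds 0) ∧
    ∃ Z, ∀ z ≥ Z,
      m * φ z ^ (m-1) * deriv φ z < 0 ∧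
      -(((β - m)/(2*(β-1))) * z * φ z) ≤ m * φ z ^ (m-1) * deriv φ z ∧
      |deriv φ z| ≤ (((β - m)/(2*(β-1)))/m) * z * φ z ^ (2-m) := by
  have hφd : Differentiable ℝ φ := hφ.differentiable (by norm_num)
  have hchain : ∀ z ∈ Ioi z₀, deriv (fun y => φ y ^ m) z = m * φ z ^ (m-1) * deriv φ z :=
    fun z hz => by rw [deriv_rpow_const (hφd z) (Or.inl (hpos z hz).ne')]; ring
  have hψ_anti : AntitoneOn (fun y => φ y ^ m) (Ioi z₀) := fun x hx y hy hxy =>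
    rpow_le_rpow (hpos y hy).le (hdec.antitoneOn hx hy hxy) hm0.le
  have hnonpos : ∀ z ∈ Ioi z₀, deriv (fun y => φ y ^ m) z ≤ 0 :=
    fun z hz => deriv_nonpos_of_antitoneOn isOpen_Ioi hψ_anti hz
  have hneg : ∀ z ∈ Ioi z₀, deriv (fun y => φ y ^ m) z < 0 :=
    fun z hz => deriv_rpow_lt_zero hm0 hβ hr.le hφd hpos hODE hnonpos hz
  have hlow : ∀ z ∈ Ioi z₀,
      -((β - m) / (2 * (β - 1)) * z * φ z) ≤ deriv (fun y => φ y ^ m) z := fun z hz =>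
    neg_mul_le_deriv_rpow hβ (by linarith) (by linarith) hr.le hz₀.le hφ hpos hODE hz
  refine ⟨?_, z₀ + 1, fun z hz => ?_⟩
  · have hlow_lim :
        Tendsto (fun z => -((β - m) / (2 * (β - 1)) * z * φ z)) atTop (nhds 0) := by
      simpa [mul_assoc] using (hzφ.const_mul ((β - m) / (2 * (β - 1)))).neg
    refine tendsto_of_tendsto_of_tendsto_of_le_of_le' hlow_lim tendsto_const_nhds ?_ ?_
    all_goals filter_upwards [eventually_gt_atTop z₀] with z hz
    exacts [hlow z hz, hnonpos z hz]
  · have hz' : z ∈ Ioi z₀ := (lt_add_one z₀).trans_le hz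
    have hneg_z := hneg z hz'
    have hlow_z := hlow z hz'
    rw [hchain z hz'] at hneg_z hlow_z
    exact ⟨hneg_z, hlow_z, abs_le_of_neg_mul_le_mul_rpow_mul hm0 (hpos z hz') hneg_z hlow_z⟩

theorem tail_derivative_estimates
    (m β r z₀ : ℝ) (hm0 : 0 < m) (hm1 : m < 1) (hβ : 1 < β) (hβm : β < 2 - m)
    (hr : 0 < r) (hz₀ : 0 < z₀)
    (φ : ℝ → ℝ) (hφ : ContDiff ℝ 2 φ)
    (hpos : ∀ z ∈ Ioi z₀, 0 < φ z)
    (hdec : StrictAntiOn φ (Ioi z₀))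
    (hODE : ∀ z ∈ Ioi z₀, -(1/(β-1)) * (φ z + ((β - m)/2) * z * deriv φ z)
      = deriv (deriv (fun y => φ y ^ m)) z + r * φ z ^ β)
    (K : ℝ) (hK : 0 < K)
    (hdecay : ∃ Z, ∀ z ≥ Z, φ z ≤ K * z ^ (-(2/(1-m))))
    (hzφ : Tendsto (fun z => z * φ z) atTop (nhds 0)) :
    Tendsto (deriv (fun z => φ z ^ m)) atTop (nhds 0) ∧
    ∃ Z, ∀ z ≥ Z,
      m * φ z ^ (m-1) * deriv φ z < 0 ∧
      -(((β - m)/(2*(β-1))) * z * φ z) ≤ m * φ z ^ (m-1) * deriv φ z ∧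
      |deriv φ z| ≤ (((β - m)/(2*(β-1)))/m) * z * φ z ^ (2-m) :=
  tail_derivative_estimates_general m β r z₀ hm0 hβ hβm hr hz₀ φ hφ hpos hdec hODE hzφ
end

section
/- Let m ∈ (0,1), β > 1 with β < 2−m, r > 0, z₀ > 0, and γ₁ ∈ (0, 1/(1−m)). Then ψ̃(z) := (z−z₀)^{−γ₁} is a strict subsolution of the self-similar ODE −(1/(β−1))(φ + ((β−m)/2) z φ') = (φ^m)'' + r φ^β on some right neighborhood (z₀, z₀+δ] of z₀, i.e. −(1/(β−1))(ψ̃(z) + ((β−m)/2) z ψ̃'(z)) < (ψ̃^m)''(z) + r ψ̃^β(z) there. -/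
open Real Set

private lemma deriv_rpow_sub (z₀ p z : ℝ) (hz : z₀ < z) :
    deriv (fun y : ℝ => (y - z₀) ^ p) z = p * (z - z₀) ^ (p - 1) := by
  have h1 : HasDerivAt (fun y : ℝ => y - z₀) 1 z := (hasDerivAt_id z).sub_const z₀
  have h2 := h1.rpow_const (p := p) (Or.inl (ne_of_gt (sub_pos.mpr hz)))
  simpa using h2.deriv

private lemma second_deriv_eq (z₀ γ₁ m z : ℝ) (hz : z₀ < z) :
    deriv (deriv (fun y : ℝ => ((y - z₀) ^ (-γ₁)) ^ m)) z
      = (-γ₁ * m) * (-γ₁ * m - 1) * (z - z₀) ^ (-γ₁ * m - 2) := by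
  have key : ∀ y ∈ Ioi z₀, deriv (fun y : ℝ => ((y - z₀) ^ (-γ₁)) ^ m) y
      = (-γ₁ * m) * (y - z₀) ^ (-γ₁ * m - 1) := by
    intro y hy
    have heq : (fun y : ℝ => ((y - z₀) ^ (-γ₁)) ^ m) =ᶠ[nhds y]
        (fun y : ℝ => (y - z₀) ^ (-γ₁ * m)) := by
      filter_upwards [isOpen_Ioi.mem_nhds hy] with x hx
      rw [← Real.rpow_mul (le_of_lt (sub_pos.mpr hx))]
    rw [heq.deriv_eq, deriv_rpow_sub z₀ _ y hy]
  have heq2 : deriv (fun y : ℝ => ((y - z₀) ^ (-γ₁)) ^ m) =ᶠ[nhds z]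
      (fun y : ℝ => (-γ₁ * m) * (y - z₀) ^ (-γ₁ * m - 1)) := by
    filter_upwards [isOpen_Ioi.mem_nhds hz] with x hx
    exact key x hx
  rw [heq2.deriv_eq]
  have h1 : HasDerivAt (fun y : ℝ => (y - z₀) ^ (-γ₁ * m - 1))
      ((-γ₁ * m - 1) * (z - z₀) ^ (-γ₁ * m - 1 - 1)) z := by
    have := ((hasDerivAt_id z).sub_const z₀).rpow_const
      (p := -γ₁ * m - 1) (Or.inl (ne_of_gt (sub_pos.mpr hz)))
    simpa using this
  have h2 := HasDerivAt.const_mul (-γ₁ * m) h1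
  rw [h2.deriv, show -γ₁ * m - 1 - 1 = -γ₁ * m - 2 by ring]
  ring

theorem tilde_psi_strict_subsolution
    (m β r z₀ γ₁ : ℝ) (hm0 : 0 < m) (hm1 : m < 1) (hβ : 1 < β) (hβm : β < 2 - m)
    (hr : 0 < r) (hz₀ : 0 < z₀) (hγ₁0 : 0 < γ₁) (hγ₁ : γ₁ < 1/(1-m)) :
    ∃ δ > 0, ∀ z ∈ Ioc z₀ (z₀ + δ),
      -(1/(β-1)) * ((z - z₀) ^ (-γ₁) +
          ((β - m)/2) * z * deriv (fun y => (y - z₀) ^ (-γ₁)) z)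
        < deriv (deriv (fun y => ((y - z₀) ^ (-γ₁)) ^ m)) z
          + r * ((z - z₀) ^ (-γ₁)) ^ β := by
  have hβ1 : 0 < β - 1 := by linarith
  have hβm' : 0 < β - m := by linarith
  have hm1' : 0 < 1 - m := by linarith
  set A : ℝ := (1/(β-1)) * ((β-m)/2) * (z₀+1) * γ₁ with hAdef
  set B : ℝ := γ₁ * m * (γ₁ * m + 1) with hBdef
  have hA : 0 < A := by positivity
  have hB : 0 < B := by positivity
  set ε : ℝ := 1 - γ₁ * (1 - m) with hεdef
  have hε : 0 < ε := by
    have : γ₁ * (1 - m) < 1 := by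
      rw [div_eq_mul_inv, one_mul] at hγ₁
      calc γ₁ * (1 - m) < (1-m)⁻¹ * (1 - m) := by
            apply mul_lt_mul_of_pos_right hγ₁ hm1'
        _ = 1 := inv_mul_cancel₀ (ne_of_gt hm1')
    simpa [hεdef] using by linarith
  refine ⟨min 1 ((B/A) ^ (1/ε)), lt_min one_pos (Real.rpow_pos_of_pos (by positivity) _), ?_⟩
  intro z hz
  obtain ⟨hz1, hz2⟩ := hz
  have hzub : z ≤ z₀ + 1 := le_trans hz2 (by linarith [min_le_left (1:ℝ) ((B/A) ^ (1/ε))])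
  have hh : 0 < z - z₀ := sub_pos.mpr hz1
  set h : ℝ := z - z₀ with hhdef
  have hh1 : h ≤ (B/A) ^ (1/ε) :=
    le_trans (by linarith) (min_le_right (1:ℝ) ((B/A) ^ (1/ε)))
  rw [deriv_rpow_sub z₀ (-γ₁) z hz1, second_deriv_eq z₀ γ₁ m z hz1]
  have P1 : 0 < h ^ (-γ₁) := Real.rpow_pos_of_pos hh _
  have P2 : 0 < h ^ (-γ₁ - 1) := Real.rpow_pos_of_pos hh _
  have P3 : 0 < h ^ (-γ₁ * m - 2) := Real.rpow_pos_of_pos hh _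
  have P4 : 0 ≤ r * (h ^ (-γ₁)) ^ β := by positivity
  -- key bound : A * h ^ ε ≤ B
  have hAB : A * h ^ ε ≤ B := by
    have e1 : h ^ ε ≤ ((B/A) ^ (1/ε)) ^ ε := Real.rpow_le_rpow hh.le hh1 hε.le
    have e2 : ((B/A) ^ (1/ε)) ^ ε = B / A := by
      rw [← Real.rpow_mul (by positivity : (0:ℝ) ≤ B/A), one_div_mul_cancel hε.ne',
        Real.rpow_one]
    have e3 : h ^ ε ≤ B / A := e1.trans_eq e2
    calc A * h ^ ε ≤ A * (B / A) := mul_le_mul_of_nonneg_left e3 hA.le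
      _ = B := by field_simp
  have hsplit : h ^ (-γ₁ - 1) = h ^ ε * h ^ (-γ₁ * m - 2) := by
    rw [← Real.rpow_add hh]
    congr 1
    ring
  calc -(1/(β-1)) * (h ^ (-γ₁) + ((β - m)/2) * z * (-γ₁ * h ^ (-γ₁ - 1)))
      = -(1/(β-1)) * h ^ (-γ₁) + (1/(β-1)) * ((β-m)/2) * γ₁ * z * h ^ (-γ₁ - 1) := by
        ring
    _ < (1/(β-1)) * ((β-m)/2) * γ₁ * z * h ^ (-γ₁ - 1) := by
        have : 0 < (1/(β-1)) * h ^ (-γ₁) := by positivity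
        linarith
    _ ≤ (1/(β-1)) * ((β-m)/2) * γ₁ * (z₀+1) * h ^ (-γ₁ - 1) := by
        gcongr
    _ = A * h ^ (-γ₁ - 1) := by rw [hAdef]; ring
    _ = A * h ^ ε * h ^ (-γ₁ * m - 2) := by rw [hsplit]; ring
    _ ≤ B * h ^ (-γ₁ * m - 2) := mul_le_mul_of_nonneg_right hAB P3.le
    _ ≤ (-γ₁ * m) * (-γ₁ * m - 1) * h ^ (-γ₁ * m - 2) + r * (h ^ (-γ₁)) ^ β := by
        have hB' : (-γ₁ * m) * (-γ₁ * m - 1) = B := by rw [hBdef]; ring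
        rw [hB']
        linarith
end
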